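/- Minimal hitting-set duality, second direction: a set Y ⊆ Fin m is a CXp if and only if Y is a minimal hitting set of the family 𝔸 = {X ⊆ Fin m | X is an AXp}. -/
import Mathlib


/-- `WAXp κ v X` holds iff fixing the features of `X` to the values of `v`
suffices for the prediction `κ v`. -/
def WAXp {m : ℕ} {D : Fin m → Type} {K : Type}
    (κ : (∀ i, D i) → K) (v : ∀ i, D i) (X : Finset (Fin m)) : Prop :=
  ∀ x : ∀ i, D i, (∀ i ∈ X, x i = v i) → κ x = κ v

/-- `X` is an AXp iff it is a subset-minimal weak AXp. -/
def AXp {m : ℕ} {D : Fin m → Type} {K : Type}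
    (κ : (∀ i, D i) → K) (v : ∀ i, D i) (X : Finset (Fin m)) : Prop :=
  WAXp κ v X ∧ ∀ X' ⊂ X, ¬ WAXp κ v X'

/-- `WCXp κ v Y` holds iff keeping features outside `Y` fixed to the values of `v`,
the prediction can be changed. -/
def WCXp {m : ℕ} {D : Fin m → Type} {K : Type}
    (κ : (∀ i, D i) → K) (v : ∀ i, D i) (Y : Finset (Fin m)) : Prop :=
  ∃ x : ∀ i, D i, (∀ i ∉ Y, x i = v i) ∧ κ x ≠ κ v

/-- `Y` is a CXp iff it is a subset-minimal weak CXp. -/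
def CXp {m : ℕ} {D : Fin m → Type} {K : Type}
    (κ : (∀ i, D i) → K) (v : ∀ i, D i) (Y : Finset (Fin m)) : Prop :=
  WCXp κ v Y ∧ ∀ Y' ⊂ Y, ¬ WCXp κ v Y'

/-- `H` is a minimal hitting set of the family `𝔖` of subsets of `Fin m`. -/
def MHS {m : ℕ} (𝔖 : Set (Finset (Fin m))) (H : Finset (Fin m)) : Prop :=
  (∀ S ∈ 𝔖, H ∩ S ≠ ∅) ∧ ∀ H' ⊂ H, ¬ (∀ S ∈ 𝔖, H' ∩ S ≠ ∅)

lemma waxp_mono {m : ℕ} {D : Fin m → Type} {K : Type}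
    (κ : (∀ i, D i) → K) (v : ∀ i, D i) {X X' : Finset (Fin m)}
    (h : X ⊆ X') (hw : WAXp κ v X) : WAXp κ v X' :=
  fun x hx => hw x (fun i hi => hx i (h hi))

lemma waxp_compl_iff {m : ℕ} {D : Fin m → Type} {K : Type}
    (κ : (∀ i, D i) → K) (v : ∀ i, D i) (Y : Finset (Fin m)) :
    WAXp κ v Yᶜ ↔ ¬ WCXp κ v Y := by
  unfold WAXp WCXp
  push_neg
  simp only [Finset.mem_compl]

lemma exists_axp_subset {m : ℕ} {D : Fin m → Type} {K : Type}
    (κ : (∀ i, D i) → K) (v : ∀ i, D i) (S : Finset (Fin m))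
    (hS : WAXp κ v S) : ∃ X ⊆ S, AXp κ v X := by
  induction S using Finset.strongInductionOn with
  | _ S ih =>
    by_cases h : ∃ S' ⊂ S, WAXp κ v S'
    · obtain ⟨S', hS', hw⟩ := h
      obtain ⟨X, hX, hax⟩ := ih S' hS' hw
      exact ⟨X, hX.trans hS'.subset, hax⟩
    · push_neg at h
      exact ⟨S, subset_rfl, hS, h⟩

/-- MHS duality, second direction: the CXp's are exactly the minimal hitting sets of
the set of all AXp's. -/
theorem cxp_iff_mhs_of_axps {m : ℕ} {D : Fin m → Type}
    [∀ i, Nonempty (D i)] {K : Type}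
    (κ : (∀ i, D i) → K) (v : ∀ i, D i) (Y : Finset (Fin m)) :
    CXp κ v Y ↔ MHS {X : Finset (Fin m) | AXp κ v X} Y := by
  constructor
  · rintro ⟨hY, hmin⟩
    constructor
    · intro X hX hint
      have hsub : X ⊆ Yᶜ := by
        intro i hi
        rw [Finset.mem_compl]
        intro hiY
        exact Finset.notMem_empty i (hint ▸ Finset.mem_inter.mpr ⟨hiY, hi⟩)
      exact (waxp_compl_iff κ v Y).mp (waxp_mono κ v hsub hX.1) hY
    · intro Y' hY' hhit
      apply hmin Y' hY'
      by_contra hnc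
      have hw : WAXp κ v Y'ᶜ := (waxp_compl_iff κ v Y').mpr hnc
      obtain ⟨X, hXs, hax⟩ := exists_axp_subset κ v Y'ᶜ hw
      apply hhit X hax
      ext i
      simp only [Finset.mem_inter, Finset.notMem_empty, iff_false, not_and]
      intro hiY' hiX
      exact (Finset.mem_compl.mp (hXs hiX)) hiY'
  · rintro ⟨hhit, hmin⟩
    constructor
    · by_contra hnc
      have hw : WAXp κ v Yᶜ := (waxp_compl_iff κ v Y).mpr hnc
      obtain ⟨X, hXs, hax⟩ := exists_axp_subset κ v Yᶜ hw
      apply hhit X hax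
      ext i
      simp only [Finset.mem_inter, Finset.notMem_empty, iff_false, not_and]
      intro hiY hiX
      exact (Finset.mem_compl.mp (hXs hiX)) hiY
    · intro Y' hY' hwc
      apply hmin Y' hY'
      intro X hX hint
      have hsub : X ⊆ Y'ᶜ := by
        intro i hi
        rw [Finset.mem_compl]
        intro hiY
        exact Finset.notMem_empty i (hint ▸ Finset.mem_inter.mpr ⟨hiY, hi⟩)
      exact (waxp_compl_iff κ v Y').mp (waxp_mono κ v hsub hX.1) hwc
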